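/- (Cuntz-Krieger uniqueness theorem.) Let k be a positive integer, Λ an aperiodic row-finite k-graph without sources, R a commutative ring with 1, and A a ring. If π : KP_R(Λ) → A is a ring homomorphism such that π(rp_v) ≠ 0 for all r ∈ R∖{0} and all v ∈ Λ^0, then π is injective. -/

import Mathlib

namespace KP

/-- A `k`-graph: a nonempty countable small category `Λ` together with a degree
functor `d : Λ → ℕ^k` satisfying the unique factorization property.  Objects
(vertices) are identified with identity morphisms via `ident`.  The composition
`comp l m` is only meaningful when `s l = r m`. -/
structure KGraph (k : ℕ) where
  V : Type
  E : Type
  nonemptyV : Nonempty V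
  countableE : Countable E
  r : E → V
  s : E → V
  d : E → Fin k → ℕ
  ident : V → E
  comp : E → E → E
  r_ident : ∀ v, r (ident v) = v
  s_ident : ∀ v, s (ident v) = v
  d_ident : ∀ v, d (ident v) = 0
  r_comp : ∀ ⦃l m : E⦄, s l = r m → r (comp l m) = r l
  s_comp : ∀ ⦃l m : E⦄, s l = r m → s (comp l m) = s m
  d_comp : ∀ ⦃l m : E⦄, s l = r m → d (comp l m) = d l + d m
  comp_assoc : ∀ ⦃l m n : E⦄, s l = r m → s m = r n →
    comp (comp l m) n = comp l (comp m n)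
  ident_comp : ∀ l : E, comp (ident (r l)) l = l
  comp_ident : ∀ l : E, comp l (ident (s l)) = l
  eq_ident_of_d_eq_zero : ∀ l : E, d l = 0 → l = ident (r l)
  factor : ∀ (l : E) (m n : Fin k → ℕ), d l = m + n →
    ∃! p : E × E, d p.1 = m ∧ d p.2 = n ∧ s p.1 = r p.2 ∧ comp p.1 p.2 = l

namespace KGraph

variable {k : ℕ}

/-- `Λ` is row-finite if every `vΛ^n` is finite. -/
def RowFinite (Λ : KGraph k) : Prop :=
  ∀ (v : Λ.V) (n : Fin k → ℕ), {l : Λ.E | Λ.r l = v ∧ Λ.d l = n}.Finite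

/-- `Λ` has no sources if every `vΛ^n` is nonempty. -/
def NoSources (Λ : KGraph k) : Prop :=
  ∀ (v : Λ.V) (n : Fin k → ℕ), ∃ l : Λ.E, Λ.r l = v ∧ Λ.d l = n

/-- `H ⊆ Λ^0` is hereditary if `r(l) ∈ H` implies `s(l) ∈ H`. -/
def HereditarySet (Λ : KGraph k) (H : Set Λ.V) : Prop :=
  ∀ l : Λ.E, Λ.r l ∈ H → Λ.s l ∈ H

/-- `H ⊆ Λ^0` is saturated if `s(vΛ^n) ⊆ H` implies `v ∈ H`. -/
def SaturatedSet (Λ : KGraph k) (H : Set Λ.V) : Prop :=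
  ∀ (v : Λ.V) (n : Fin k → ℕ),
    (∀ l : Λ.E, Λ.r l = v → Λ.d l = n → Λ.s l ∈ H) → v ∈ H

open Classical in
/-- The segment `l(p,q)` of a path `l`: the unique middle factor in a
factorization `l = l'l''l'''` with `d l' = p` and `d l'' = q - p` (when `p ≤ q ≤ d l`). -/
noncomputable def seg (Λ : KGraph k) (l : Λ.E) (p q : Fin k → ℕ) : Λ.E :=
  if h : ∃ t : Λ.E × Λ.E × Λ.E, Λ.d t.1 = p ∧ Λ.d t.2.1 = q - p ∧
      Λ.s t.1 = Λ.r t.2.1 ∧ Λ.s t.2.1 = Λ.r t.2.2 ∧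
      Λ.comp t.1 (Λ.comp t.2.1 t.2.2) = l
  then (Classical.choose h).2.1 else l

/-- Aperiodicity in the finite-path formulation of Robertson and Sims. -/
def Aperiodic (Λ : KGraph k) : Prop :=
  ∀ (v : Λ.V) (m n : Fin k → ℕ), m ≠ n →
    ∃ l : Λ.E, Λ.r l = v ∧ m ⊔ n ≤ Λ.d l ∧
      Λ.seg l m (m + Λ.d l - m ⊔ n) ≠ Λ.seg l n (n + Λ.d l - m ⊔ n)

end KGraph

/-- An infinite path in `Λ`: a degree-preserving functor `x : Ω_k → Λ`,
recorded by its segments `x.f p q = x(p,q)` for `p ≤ q`. -/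
structure InfPath {k : ℕ} (Λ : KGraph k) where
  f : (Fin k → ℕ) → (Fin k → ℕ) → Λ.E
  deg : ∀ p q : Fin k → ℕ, p ≤ q → Λ.d (f p q) = q - p
  compat : ∀ p q u : Fin k → ℕ, p ≤ q → q ≤ u → Λ.s (f p q) = Λ.r (f q u)
  comp_f : ∀ p q u : Fin k → ℕ, p ≤ q → q ≤ u → Λ.comp (f p q) (f q u) = f p u

/-- The vertex `x(n)` of an infinite path. -/
def InfPath.vtx {k : ℕ} {Λ : KGraph k} (x : InfPath Λ) (n : Fin k → ℕ) : Λ.V :=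
  Λ.r (x.f n n)

/-- `Λ` is cofinal if for every infinite path `x` and vertex `v` there is `n`
with `vΛx(n)` nonempty. -/
def KGraph.Cofinal {k : ℕ} (Λ : KGraph k) : Prop :=
  ∀ (x : InfPath Λ) (v : Λ.V), ∃ (n : Fin k → ℕ) (l : Λ.E),
    Λ.r l = v ∧ Λ.s l = x.vtx n

/-- A Kumjian-Pask `Λ`-family in a ring `A`.  `P v = P_v`, `S l = S_l` and
`S' l = S_{l*}`; by convention `S` and `S'` are extended to vertices (paths of
degree `0`) by `S_v = S_{v*} = P_v`. -/
structure KPFamily {k : ℕ} (Λ : KGraph k) (A : Type) [Ring A] where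
  P : Λ.V → A
  S : Λ.E → A
  S' : Λ.E → A
  S_ident : ∀ v, S (Λ.ident v) = P v
  S'_ident : ∀ v, S' (Λ.ident v) = P v
  idem : ∀ v, P v * P v = P v
  orth : ∀ v w, v ≠ w → P v * P w = 0
  mul_S : ∀ ⦃l m : Λ.E⦄, Λ.d l ≠ 0 → Λ.d m ≠ 0 → Λ.s l = Λ.r m →
    S l * S m = S (Λ.comp l m)
  mul_S' : ∀ ⦃l m : Λ.E⦄, Λ.d l ≠ 0 → Λ.d m ≠ 0 → Λ.s l = Λ.r m →
    S' m * S' l = S' (Λ.comp l m)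
  P_mul_S : ∀ l : Λ.E, Λ.d l ≠ 0 → P (Λ.r l) * S l = S l
  S_mul_P : ∀ l : Λ.E, Λ.d l ≠ 0 → S l * P (Λ.s l) = S l
  P_mul_S' : ∀ l : Λ.E, Λ.d l ≠ 0 → P (Λ.s l) * S' l = S' l
  S'_mul_P : ∀ l : Λ.E, Λ.d l ≠ 0 → S' l * P (Λ.r l) = S' l
  KP3_eq : ∀ l : Λ.E, Λ.d l ≠ 0 → S' l * S l = P (Λ.s l)
  KP3_ne : ∀ l m : Λ.E, Λ.d l ≠ 0 → Λ.d l = Λ.d m → l ≠ m → S' l * S m = 0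
  KP4 : ∀ (v : Λ.V) (n : Fin k → ℕ), n ≠ 0 → ∀ F : Finset Λ.E,
    (∀ l : Λ.E, l ∈ F ↔ Λ.r l = v ∧ Λ.d l = n) →
    P v = ∑ l ∈ F, S l * S' l

/-- The Kumjian-Pask algebra of `Λ` with coefficients in `R`: an `R`-algebra
`A` together with a generating Kumjian-Pask family `(p,s)` which is universal
for Kumjian-Pask `Λ`-families, carries a `ℤ^k`-grading with the prescribed
homogeneous components, and in which `r • p_v ≠ 0` for `r ≠ 0`. -/
structure KPAlgebra {k : ℕ} (Λ : KGraph k) (R : Type) [CommRing R]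
    (A : Type) [Ring A] [Algebra R A] where
  fam : KPFamily Λ A
  universal : ∀ (B : Type) [Ring B] [Algebra R B] (QT : KPFamily Λ B),
    ∃! φ : A →ₐ[R] B,
      (∀ v, φ (fam.P v) = QT.P v) ∧
      (∀ l, Λ.d l ≠ 0 → φ (fam.S l) = QT.S l) ∧
      (∀ l, Λ.d l ≠ 0 → φ (fam.S' l) = QT.S' l)
  grading : (Fin k → ℤ) → AddSubgroup A
  grading_mul : ∀ (m n : Fin k → ℤ), ∀ a ∈ grading m, ∀ b ∈ grading n,
    a * b ∈ grading (m + n)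
  grading_internal : DirectSum.IsInternal grading
  grading_eq : ∀ n : Fin k → ℤ, (grading n : Set A) =
    ↑(Submodule.span R {x : A | ∃ l m : Λ.E,
      (fun i => (Λ.d l i : ℤ) - (Λ.d m i : ℤ)) = n ∧ x = fam.S l * fam.S' m})
  smul_P_ne_zero : ∀ (v : Λ.V) (c : R), c ≠ 0 → c • fam.P v ≠ 0

/-- A `G`-grading on a ring `A`: additive subgroups with `A_g A_h ⊆ A_{g+h}`
such that `A` is their internal direct sum. -/
def IsGrading {G A : Type} [AddCommGroup G] [DecidableEq G] [Ring A]
    (gr : G → AddSubgroup A) : Prop :=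
  (∀ g h : G, ∀ a ∈ gr g, ∀ b ∈ gr h, a * b ∈ gr (g + h)) ∧
  DirectSum.IsInternal gr

/-- An ideal `I` is graded when every element of `I` is a sum of homogeneous
elements of `I`, i.e. `I = Σ_g (I ∩ A_g)`. -/
def IsGradedIdeal {G A : Type} [Ring A] (gr : G → AddSubgroup A)
    (I : TwoSidedIdeal A) : Prop :=
  ∀ x ∈ I, x ∈ AddSubgroup.closure {y : A | y ∈ I ∧ ∃ g : G, y ∈ gr g}

/-- An ideal `I` of `KP_R(Λ)` is basic if `c • p_v ∈ I` with `c ≠ 0` implies `p_v ∈ I`. -/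
def IsBasic {k : ℕ} {Λ : KGraph k} {R : Type} [CommRing R]
    {A : Type} [Ring A] [Algebra R A] (KP : KPAlgebra Λ R A)
    (I : TwoSidedIdeal A) : Prop :=
  ∀ (c : R) (v : Λ.V), c ≠ 0 → c • KP.fam.P v ∈ I → KP.fam.P v ∈ I

/-- An ideal is idempotent if it is spanned by products `a * b` with `a, b ∈ I`. -/
def IsIdempotentIdeal {A : Type} [Ring A] (I : TwoSidedIdeal A) : Prop :=
  (I : Set A) ⊆ ↑(AddSubgroup.closure {x : A | ∃ a ∈ I, ∃ b ∈ I, x = a * b})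

/-- `RestrCompat Λ H Λ' eV eE` asserts that `Λ'` is (a realization of) the
subgraph `Λ∖H = (Λ^0∖H, {l ∈ Λ : s(l) ∉ H}, r, s)` with the restricted
structure maps, the identifications being given by the equivalences `eV`, `eE`. -/
def RestrCompat {k : ℕ} (Λ : KGraph k) (H : Set Λ.V) (Λ' : KGraph k)
    (eV : Λ'.V ≃ {v : Λ.V // v ∉ H}) (eE : Λ'.E ≃ {l : Λ.E // Λ.s l ∉ H}) : Prop :=
  (∀ l : Λ'.E, (eV (Λ'.r l)).1 = Λ.r (eE l).1) ∧
  (∀ l : Λ'.E, (eV (Λ'.s l)).1 = Λ.s (eE l).1) ∧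
  (∀ l : Λ'.E, Λ'.d l = Λ.d (eE l).1) ∧
  (∀ v : Λ'.V, (eE (Λ'.ident v)).1 = Λ.ident (eV v).1) ∧
  (∀ l m : Λ'.E, Λ'.s l = Λ'.r m →
    (eE (Λ'.comp l m)).1 = Λ.comp (eE l).1 (eE m).1)

/-- `Ind M`: the ideal of `KP_R(Λ)` induced by a set (ideal) `M` of coefficients,
`Ind M = span_R {c • s_a s_{b*} : c ∈ M, a b ∈ Λ}`. -/
def IndSpan {k : ℕ} {Λ : KGraph k} {R : Type} [CommRing R]
    {A : Type} [Ring A] [Algebra R A] (KP : KPAlgebra Λ R A) (M : Set R) :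
    Submodule R A :=
  Submodule.span R {x : A | ∃ c ∈ M, ∃ a b : Λ.E, x = c • (KP.fam.S a * KP.fam.S' b)}

/-- `Res I = {c ∈ R : c • p_v ∈ I for all v ∈ Λ^0}`. -/
def ResSet {k : ℕ} {Λ : KGraph k} {R : Type} [CommRing R]
    {A : Type} [Ring A] [Algebra R A] (KP : KPAlgebra Λ R A) (I : Set A) : Set R :=
  {c : R | ∀ v : Λ.V, c • KP.fam.P v ∈ I}

/-
Every element of `KP_R(Λ)` is an `R`-combination of monomials `s_μ s_ν*`, and expanding with
(KP4) one may take all `μ` of one degree `N` with `s μ = s ν`. If `a ≠ 0` lies in `ker π`, pick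
such a monomial `s_μ₀ s_ν₀*` with coefficient `c ≠ 0`. Compressing `a` by `s_μ₀*` and `s_ν₀`
leaves `c p_{s ν₀}` plus terms `s_ν* s_ν₀` with `ν ≠ ν₀`, and those with `d ν = d ν₀` vanish by
(KP3). Aperiodicity, applied once for each of the finitely many remaining degrees and the paths
concatenated, gives `λ` from `s ν₀` such that the tails of `λ` from degrees `d ν₀` and `d ν`
have no common extension; then `νλ` and `ν₀λ` have none either, so `s_λ* s_ν* s_ν₀ s_λ = 0`.
Compressing by `s_λ` as well leaves `c p_{s λ} ∈ ker π`, which the hypothesis on `π` forbids.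
-/

namespace KGraph

variable {k : ℕ} {Λ : KGraph k}

lemma s_eq_r_of_d_eq_zero {l : Λ.E} (h : Λ.d l = 0) : Λ.s l = Λ.r l := by
  rw [Λ.eq_ident_of_d_eq_zero l h, Λ.s_ident, Λ.r_ident]

variable (Λ) in
open Classical in
noncomputable def factorAt (l : Λ.E) (m : Fin k → ℕ) : Λ.E × Λ.E :=
  if h : m ≤ Λ.d l then
    (Λ.factor l m (Λ.d l - m) (add_tsub_cancel_of_le h).symm).exists.choose
  else (l, l)

variable (Λ) in
noncomputable def take (l : Λ.E) (m : Fin k → ℕ) : Λ.E := (Λ.factorAt l m).1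

variable (Λ) in
noncomputable def drop (l : Λ.E) (m : Fin k → ℕ) : Λ.E := (Λ.factorAt l m).2

section Factorization

variable {l a b : Λ.E} {m n : Fin k → ℕ}

lemma factorAt_spec (h : m ≤ Λ.d l) :
    Λ.d (Λ.take l m) = m ∧ Λ.d (Λ.drop l m) = Λ.d l - m ∧
      Λ.s (Λ.take l m) = Λ.r (Λ.drop l m) ∧ Λ.comp (Λ.take l m) (Λ.drop l m) = l := by
  rw [take, drop, factorAt, dif_pos h]
  exact (Λ.factor l m (Λ.d l - m) (add_tsub_cancel_of_le h).symm).exists.choose_spec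

lemma d_take (h : m ≤ Λ.d l) : Λ.d (Λ.take l m) = m := (factorAt_spec h).1

lemma d_drop (h : m ≤ Λ.d l) : Λ.d (Λ.drop l m) = Λ.d l - m := (factorAt_spec h).2.1

lemma s_take (h : m ≤ Λ.d l) : Λ.s (Λ.take l m) = Λ.r (Λ.drop l m) := (factorAt_spec h).2.2.1

lemma comp_take_drop (h : m ≤ Λ.d l) : Λ.comp (Λ.take l m) (Λ.drop l m) = l :=
  (factorAt_spec h).2.2.2

lemma s_drop (h : m ≤ Λ.d l) : Λ.s (Λ.drop l m) = Λ.s l := by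
  conv_rhs => rw [← comp_take_drop h]
  rw [Λ.s_comp (s_take h)]

lemma r_take (h : m ≤ Λ.d l) : Λ.r (Λ.take l m) = Λ.r l := by
  conv_rhs => rw [← comp_take_drop h]
  rw [Λ.r_comp (s_take h)]

lemma factorAt_comp (h : Λ.s a = Λ.r b) : Λ.factorAt (Λ.comp a b) (Λ.d a) = (a, b) := by
  have hd : Λ.d (Λ.comp a b) = Λ.d a + Λ.d b := Λ.d_comp h
  have hle : Λ.d a ≤ Λ.d (Λ.comp a b) := hd ▸ le_self_add
  refine (Λ.factor _ _ _ (add_tsub_cancel_of_le hle).symm).unique (factorAt_spec hle) ?_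
  exact ⟨rfl, by rw [hd, add_tsub_cancel_left], h, rfl⟩

lemma take_comp (h : Λ.s a = Λ.r b) : Λ.take (Λ.comp a b) (Λ.d a) = a := by
  rw [take, factorAt_comp h]

lemma drop_comp (h : Λ.s a = Λ.r b) : Λ.drop (Λ.comp a b) (Λ.d a) = b := by
  rw [drop, factorAt_comp h]

lemma factorAt_comp_of_le (h : Λ.s a = Λ.r b) (hm : m ≤ Λ.d a) :
    Λ.factorAt (Λ.comp a b) m = (Λ.take a m, Λ.comp (Λ.drop a m) b) := by
  have hs : Λ.s (Λ.drop a m) = Λ.r b := (s_drop hm).trans h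
  have hab : Λ.comp a b = Λ.comp (Λ.take a m) (Λ.comp (Λ.drop a m) b) := by
    rw [← Λ.comp_assoc (s_take hm) hs, comp_take_drop hm]
  rw [hab, ← factorAt_comp ((s_take hm).trans (Λ.r_comp hs).symm), d_take hm]

lemma take_comp_of_le (h : Λ.s a = Λ.r b) (hm : m ≤ Λ.d a) :
    Λ.take (Λ.comp a b) m = Λ.take a m := by
  rw [take, factorAt_comp_of_le h hm]

lemma drop_comp_of_le (h : Λ.s a = Λ.r b) (hm : m ≤ Λ.d a) :
    Λ.drop (Λ.comp a b) m = Λ.comp (Λ.drop a m) b := by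
  rw [drop, factorAt_comp_of_le h hm]

lemma drop_comp_add (h : Λ.s a = Λ.r b) (hn : n ≤ Λ.d b) :
    Λ.drop (Λ.comp a b) (Λ.d a + n) = Λ.drop b n := by
  have hs : Λ.s (Λ.take b n) = Λ.r (Λ.drop b n) := s_take hn
  have hs' : Λ.s a = Λ.r (Λ.take b n) := h.trans (r_take hn).symm
  calc Λ.drop (Λ.comp a b) (Λ.d a + n)
      = Λ.drop (Λ.comp (Λ.comp a (Λ.take b n)) (Λ.drop b n))
          (Λ.d (Λ.comp a (Λ.take b n))) := by
        rw [Λ.comp_assoc hs' hs, comp_take_drop hn, Λ.d_comp hs', d_take hn]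
    _ = Λ.drop b n := drop_comp ((Λ.s_comp hs').trans hs)

lemma drop_drop (h : m + n ≤ Λ.d l) : Λ.drop (Λ.drop l m) n = Λ.drop l (m + n) := by
  have hm : m ≤ Λ.d l := le_self_add.trans h
  have hn : n ≤ Λ.d (Λ.drop l m) := by rw [d_drop hm]; exact le_tsub_of_add_le_left h
  rw [← drop_comp_add (s_take hm) hn, comp_take_drop hm, d_take hm]

lemma seg_eq_take_drop (hmn : m ≤ n) (hn : n ≤ Λ.d l) :
    Λ.seg l m n = Λ.take (Λ.drop l m) (n - m) := by
  have hm : m ≤ Λ.d l := hmn.trans hn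
  have hex : ∃ t : Λ.E × Λ.E × Λ.E, Λ.d t.1 = m ∧ Λ.d t.2.1 = n - m ∧
      Λ.s t.1 = Λ.r t.2.1 ∧ Λ.s t.2.1 = Λ.r t.2.2 ∧
      Λ.comp t.1 (Λ.comp t.2.1 t.2.2) = l := by
    have hnm : n - m ≤ Λ.d (Λ.drop l m) := by
      rw [d_drop hm]; exact tsub_le_tsub_right hn m
    refine ⟨(Λ.take l m, Λ.take (Λ.drop l m) (n - m), Λ.drop (Λ.drop l m) (n - m)),
      d_take hm, d_take hnm, (s_take hm).trans (r_take hnm).symm, s_take hnm, ?_⟩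
    rw [comp_take_drop hnm, comp_take_drop hm]
  rw [seg, dif_pos hex]
  obtain ⟨hd1, hd2, hs1, hs2, hc⟩ := hex.choose_spec
  set t := hex.choose
  calc t.2.1 = Λ.take (Λ.drop (Λ.comp t.1 (Λ.comp t.2.1 t.2.2)) (Λ.d t.1)) (Λ.d t.2.1) := by
        rw [drop_comp (hs1.trans (Λ.r_comp hs2).symm), take_comp hs2]
    _ = Λ.take (Λ.drop l m) (n - m) := by rw [hc, hd1, hd2]

end Factorization

def Separates (l : Λ.E) (m n : Fin k → ℕ) : Prop :=
  m ≤ Λ.d l ∧ n ≤ Λ.d l ∧ ∀ x y : Λ.E, Λ.s l = Λ.r x → Λ.s l = Λ.r y →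
    Λ.comp (Λ.drop l m) x ≠ Λ.comp (Λ.drop l n) y

namespace Separates

variable {l ρ : Λ.E} {m n g : Fin k → ℕ}

lemma of_add (h : Λ.Separates l (g + m) (g + n)) : Λ.Separates l m n := by
  obtain ⟨hgm, hgn, hne⟩ := h
  refine ⟨le_add_self.trans hgm, le_add_self.trans hgn, fun x y hx hy hxy => hne x y hx hy ?_⟩
  have hshift : ∀ {j z}, g + j ≤ Λ.d l → Λ.s l = Λ.r z →
      Λ.comp (Λ.drop l (g + j)) z = Λ.drop (Λ.comp (Λ.drop l j) z) g := by
    intro j z hj hz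
    have hj' : j ≤ Λ.d l := le_add_self.trans hj
    have hg : g ≤ Λ.d (Λ.drop l j) := by rw [d_drop hj']; exact le_tsub_of_add_le_right hj
    rw [drop_comp_of_le ((s_drop hj').trans hz) hg, drop_drop (by rwa [add_comm]), add_comm]
  rw [hshift hgm hx, hxy, ← hshift hgn hy]

lemma comp_right (h : Λ.s l = Λ.r ρ) (hl : Λ.Separates l m n) :
    Λ.Separates (Λ.comp l ρ) m n := by
  obtain ⟨hm, hn, hne⟩ := hl
  have hle : Λ.d l ≤ Λ.d (Λ.comp l ρ) := Λ.d_comp h ▸ le_self_add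
  refine ⟨hm.trans hle, hn.trans hle, fun x y hx hy hxy => ?_⟩
  rw [Λ.s_comp h] at hx hy
  refine hne (Λ.comp ρ x) (Λ.comp ρ y) (h.trans (Λ.r_comp hx).symm)
    (h.trans (Λ.r_comp hy).symm) ?_
  rwa [drop_comp_of_le h hm, drop_comp_of_le h hn, Λ.comp_assoc ((s_drop hm).trans h) hx,
    Λ.comp_assoc ((s_drop hn).trans h) hy] at hxy

lemma comp_left (h : Λ.s l = Λ.r ρ) (hρ : Λ.Separates ρ m n) :
    Λ.Separates (Λ.comp l ρ) (Λ.d l + m) (Λ.d l + n) := by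
  obtain ⟨hm, hn, hne⟩ := hρ
  refine ⟨?_, ?_, ?_⟩
  · rw [Λ.d_comp h]; exact add_le_add_right hm _
  · rw [Λ.d_comp h]; exact add_le_add_right hn _
  · rw [Λ.s_comp h, drop_comp_add h hm, drop_comp_add h hn]
    exact hne

lemma comp_ne {α β x y : Λ.E} (hsep : Λ.Separates l (Λ.d β) (Λ.d α))
    (hα : Λ.s α = Λ.r l) (hβ : Λ.s β = Λ.r l) (hx : Λ.s l = Λ.r x) (hy : Λ.s l = Λ.r y) :
    Λ.comp (Λ.comp α l) x ≠ Λ.comp (Λ.comp β l) y := by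
  have htail : ∀ {γ z : Λ.E} {j}, Λ.s γ = Λ.r l → Λ.s l = Λ.r z → j ≤ Λ.d l →
      Λ.drop (Λ.comp (Λ.comp γ l) z) (Λ.d γ + j) = Λ.comp (Λ.drop l j) z := by
    intro γ z j hγ hz hj
    rw [Λ.comp_assoc hγ hz, drop_comp_add (hγ.trans (Λ.r_comp hz).symm)
      (by rw [Λ.d_comp hz]; exact hj.trans le_self_add), drop_comp_of_le hz hj]
  -- both sides would have the tails `drop l (d β) x` and `drop l (d α) y` from `d α + d β`
  intro hxy
  apply hsep.2.2 x y hx hy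
  rw [← htail hα hx hsep.1, ← htail hβ hy hsep.2.1, hxy, add_comm]

end Separates

lemma exists_separates (hap : Λ.Aperiodic) (v : Λ.V) {m n : Fin k → ℕ} (hmn : m ≠ n) :
    ∃ l, Λ.r l = v ∧ Λ.Separates l m n := by
  obtain ⟨l, hrl, hle, hseg⟩ := hap v m n hmn
  refine ⟨l, hrl, le_sup_left.trans hle, le_sup_right.trans hle, fun x y hx hy hxy => hseg ?_⟩
  have htail : ∀ {j z}, j ≤ m ⊔ n → Λ.s l = Λ.r z →
      Λ.seg l j (j + Λ.d l - m ⊔ n) = Λ.take (Λ.comp (Λ.drop l j) z) (Λ.d l - m ⊔ n) := by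
    intro j z hj hz
    have hjl : j + (Λ.d l - m ⊔ n) ≤ Λ.d l := calc
      j + (Λ.d l - m ⊔ n) ≤ m ⊔ n + (Λ.d l - m ⊔ n) := add_le_add_left hj _
      _ = Λ.d l := add_tsub_cancel_of_le hle
    have hj' : j ≤ Λ.d l := le_self_add.trans hjl
    have he : Λ.d l - m ⊔ n ≤ Λ.d (Λ.drop l j) := by
      rw [d_drop hj']; exact le_tsub_of_add_le_left hjl
    rw [add_tsub_assoc_of_le hle, seg_eq_take_drop le_self_add hjl, add_tsub_cancel_left,
      take_comp_of_le ((s_drop hj').trans hz) he]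
  rw [htail le_sup_left hx, htail le_sup_right hy, hxy]

variable (Λ) in
lemma exists_forall_separates (hap : Λ.Aperiodic) (v : Λ.V) (n : Fin k → ℕ)
    (D : Finset (Fin k → ℕ)) (hD : n ∉ D) :
    ∃ l, Λ.r l = v ∧ ∀ m ∈ D, Λ.Separates l n m := by
  classical
  induction D using Finset.induction_on with
  | empty => exact ⟨Λ.ident v, Λ.r_ident v, by simp⟩
  | insert m D _ ih =>
    obtain ⟨l, hrl, hl⟩ := ih fun h => hD (Finset.mem_insert_of_mem h)
    have hnm : n ≠ m := fun h => hD (by simp [h])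
    obtain ⟨ρ, hrρ, hρ⟩ := exists_separates hap (Λ.s l) hnm
    have hlρ : Λ.s l = Λ.r ρ := hrρ.symm
    refine ⟨Λ.comp l ρ, (Λ.r_comp hlρ).trans hrl, fun m' hm' => ?_⟩
    rcases Finset.mem_insert.1 hm' with rfl | hm'
    · exact (hρ.comp_left hlρ).of_add
    · exact (hl m' hm').comp_right hlρ

noncomputable def RowFinite.paths (hrf : Λ.RowFinite) (v : Λ.V) (n : Fin k → ℕ) :
    Finset Λ.E :=
  (hrf v n).toFinset

lemma RowFinite.mem_paths (hrf : Λ.RowFinite) {v : Λ.V} {n : Fin k → ℕ} {l : Λ.E} :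
    l ∈ hrf.paths v n ↔ Λ.r l = v ∧ Λ.d l = n :=
  (hrf v n).mem_toFinset

def normalPairs (Λ : KGraph k) (N : Fin k → ℕ) : Set (Λ.E × Λ.E) :=
  {p | Λ.d p.1 = N ∧ Λ.s p.1 = Λ.s p.2}

end KGraph

namespace KPFamily

variable {k : ℕ} {Λ : KGraph k} {A : Type} [Ring A] (f : KPFamily Λ A)

lemma S_of_d_eq_zero {l : Λ.E} (h : Λ.d l = 0) : f.S l = f.P (Λ.r l) := by
  conv_lhs => rw [Λ.eq_ident_of_d_eq_zero l h]
  rw [f.S_ident]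

lemma S'_of_d_eq_zero {l : Λ.E} (h : Λ.d l = 0) : f.S' l = f.P (Λ.r l) := by
  conv_lhs => rw [Λ.eq_ident_of_d_eq_zero l h]
  rw [f.S'_ident]

lemma P_r_mul_S (l : Λ.E) : f.P (Λ.r l) * f.S l = f.S l := by
  by_cases h : Λ.d l = 0
  · rw [f.S_of_d_eq_zero h, f.idem]
  · exact f.P_mul_S l h

lemma S_mul_P_s (l : Λ.E) : f.S l * f.P (Λ.s l) = f.S l := by
  by_cases h : Λ.d l = 0
  · rw [f.S_of_d_eq_zero h, KGraph.s_eq_r_of_d_eq_zero h, f.idem]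
  · exact f.S_mul_P l h

lemma P_s_mul_S' (l : Λ.E) : f.P (Λ.s l) * f.S' l = f.S' l := by
  by_cases h : Λ.d l = 0
  · rw [f.S'_of_d_eq_zero h, KGraph.s_eq_r_of_d_eq_zero h, f.idem]
  · exact f.P_mul_S' l h

lemma S'_mul_P_r (l : Λ.E) : f.S' l * f.P (Λ.r l) = f.S' l := by
  by_cases h : Λ.d l = 0
  · rw [f.S'_of_d_eq_zero h, f.idem]
  · exact f.S'_mul_P l h

lemma S_mul_S {l m : Λ.E} (h : Λ.s l = Λ.r m) : f.S l * f.S m = f.S (Λ.comp l m) := by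
  by_cases hl : Λ.d l = 0
  · have hrm : Λ.r l = Λ.r m := (KGraph.s_eq_r_of_d_eq_zero hl).symm.trans h
    rw [Λ.eq_ident_of_d_eq_zero l hl, hrm, Λ.ident_comp, f.S_ident, f.P_r_mul_S]
  by_cases hm : Λ.d m = 0
  · rw [Λ.eq_ident_of_d_eq_zero m hm, ← h, Λ.comp_ident, f.S_ident, f.S_mul_P_s]
  exact f.mul_S hl hm h

lemma S'_mul_S' {l m : Λ.E} (h : Λ.s l = Λ.r m) : f.S' m * f.S' l = f.S' (Λ.comp l m) := by
  by_cases hl : Λ.d l = 0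
  · have hrm : Λ.r l = Λ.r m := (KGraph.s_eq_r_of_d_eq_zero hl).symm.trans h
    rw [Λ.eq_ident_of_d_eq_zero l hl, hrm, Λ.ident_comp, f.S'_ident, f.S'_mul_P_r]
  by_cases hm : Λ.d m = 0
  · rw [Λ.eq_ident_of_d_eq_zero m hm, ← h, Λ.comp_ident, f.S'_ident, f.P_s_mul_S']
  exact f.mul_S' hl hm h

lemma S'_mul_S_self (l : Λ.E) : f.S' l * f.S l = f.P (Λ.s l) := by
  by_cases h : Λ.d l = 0
  · rw [f.S_of_d_eq_zero h, f.S'_of_d_eq_zero h, KGraph.s_eq_r_of_d_eq_zero h, f.idem]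
  · exact f.KP3_eq l h

lemma S'_mul_S_of_ne {l m : Λ.E} (hd : Λ.d l = Λ.d m) (hne : l ≠ m) :
    f.S' l * f.S m = 0 := by
  by_cases h : Λ.d l = 0
  · have hm : Λ.d m = 0 := hd ▸ h
    rw [f.S'_of_d_eq_zero h, f.S_of_d_eq_zero hm]
    refine f.orth _ _ fun hr => hne ?_
    rw [Λ.eq_ident_of_d_eq_zero l h, Λ.eq_ident_of_d_eq_zero m hm, hr]
  · exact f.KP3_ne l m h hd hne

lemma S_mul_S'_of_s_ne {l m : Λ.E} (h : Λ.s l ≠ Λ.s m) : f.S l * f.S' m = 0 := by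
  rw [← f.S_mul_P_s l, ← f.P_s_mul_S' m, mul_assoc, ← mul_assoc (f.P _), f.orth _ _ h,
    zero_mul, mul_zero]

section Expansion

variable (hrf : Λ.RowFinite)
include hrf

lemma P_eq_sum (v : Λ.V) (n : Fin k → ℕ) :
    f.P v = ∑ l ∈ hrf.paths v n, f.S l * f.S' l := by
  by_cases hn : n = 0
  · subst hn
    have hpaths : hrf.paths v 0 = {Λ.ident v} := by
      ext l
      rw [hrf.mem_paths, Finset.mem_singleton]
      constructor
      · rintro ⟨rfl, h⟩; exact Λ.eq_ident_of_d_eq_zero l h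
      · rintro rfl; exact ⟨Λ.r_ident v, Λ.d_ident v⟩
    rw [hpaths, Finset.sum_singleton, f.S_ident, f.S'_ident, f.idem]
  · exact f.KP4 v n hn _ fun l => hrf.mem_paths

lemma S_eq_sum (α : Λ.E) (n : Fin k → ℕ) :
    f.S α = ∑ η ∈ hrf.paths (Λ.s α) n, f.S (Λ.comp α η) * f.S' η := by
  conv_lhs => rw [← f.S_mul_P_s α, f.P_eq_sum hrf (Λ.s α) n]
  rw [Finset.mul_sum]
  refine Finset.sum_congr rfl fun η hη => ?_
  rw [← mul_assoc, f.S_mul_S (hrf.mem_paths.1 hη).1.symm]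

lemma S'_eq_sum (β : Λ.E) (n : Fin k → ℕ) :
    f.S' β = ∑ η ∈ hrf.paths (Λ.s β) n, f.S η * f.S' (Λ.comp β η) := by
  conv_lhs => rw [← f.P_s_mul_S' β, f.P_eq_sum hrf (Λ.s β) n]
  rw [Finset.sum_mul]
  refine Finset.sum_congr rfl fun η hη => ?_
  rw [mul_assoc, f.S'_mul_S' (hrf.mem_paths.1 hη).1.symm]

lemma S_mul_S'_eq_sum {μ ν : Λ.E} (hs : Λ.s μ = Λ.s ν) (n : Fin k → ℕ) :
    f.S μ * f.S' ν =
      ∑ η ∈ hrf.paths (Λ.s μ) n, f.S (Λ.comp μ η) * f.S' (Λ.comp ν η) := by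
  rw [f.S_eq_sum hrf μ n, Finset.sum_mul]
  refine Finset.sum_congr rfl fun η hη => ?_
  rw [mul_assoc, f.S'_mul_S' (hs ▸ (hrf.mem_paths.1 hη).1.symm)]

lemma S'_mul_S_eq_zero {α β : Λ.E}
    (h : ∀ x y, Λ.s β = Λ.r x → Λ.s α = Λ.r y → Λ.comp β x ≠ Λ.comp α y) :
    f.S' β * f.S α = 0 := by
  rw [f.S'_eq_sum hrf β (Λ.d α), f.S_eq_sum hrf α (Λ.d β), Finset.sum_mul_sum]
  refine Finset.sum_eq_zero fun x hx => Finset.sum_eq_zero fun y hy => ?_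
  obtain ⟨hrx, hdx⟩ := hrf.mem_paths.1 hx
  obtain ⟨hry, hdy⟩ := hrf.mem_paths.1 hy
  have hd : Λ.d (Λ.comp β x) = Λ.d (Λ.comp α y) := by
    rw [Λ.d_comp hrx.symm, Λ.d_comp hry.symm, hdx, hdy, add_comm]
  rw [mul_assoc, ← mul_assoc (f.S' _), f.S'_mul_S_of_ne hd (h x y hrx.symm hry.symm),
    zero_mul, mul_zero]

end Expansion

def SS' (p : Λ.E × Λ.E) : A := f.S p.1 * f.S' p.2

def levelSpan (R : Type) [Semiring R] [Module R A] (N : Fin k → ℕ) : Submodule R A :=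
  Submodule.span R (f.SS' '' Λ.normalPairs N)

section LevelSpan

variable {R : Type} [Semiring R] [Module R A] (hrf : Λ.RowFinite)
include hrf

lemma SS'_mem_levelSpan {p : Λ.E × Λ.E} {N : Fin k → ℕ} (h : Λ.d p.1 ≤ N) :
    f.SS' p ∈ f.levelSpan R N := by
  by_cases hs : Λ.s p.1 = Λ.s p.2
  · rw [SS', f.S_mul_S'_eq_sum hrf hs (N - Λ.d p.1)]
    refine Submodule.sum_mem _ fun η hη =>
      Submodule.subset_span ⟨(Λ.comp p.1 η, Λ.comp p.2 η), ?_, rfl⟩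
    obtain ⟨hr, hd⟩ := hrf.mem_paths.1 hη
    refine ⟨by rw [Λ.d_comp hr.symm, hd, add_tsub_cancel_of_le h], ?_⟩
    rw [Λ.s_comp hr.symm, Λ.s_comp (hs ▸ hr.symm)]
  · rw [SS', f.S_mul_S'_of_s_ne hs]
    exact zero_mem _

lemma levelSpan_mono {N N' : Fin k → ℕ} (h : N ≤ N') :
    f.levelSpan R N ≤ f.levelSpan R N' :=
  Submodule.span_le.2 <| by
    rintro _ ⟨p, ⟨hd, -⟩, rfl⟩
    exact f.SS'_mem_levelSpan hrf (hd.trans_le h)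

lemma exists_mem_levelSpan {a : A} (ha : a ∈ Submodule.span R (Set.range f.SS')) :
    ∃ N, a ∈ f.levelSpan R N := by
  induction ha using Submodule.span_induction with
  | mem _ h =>
    obtain ⟨p, rfl⟩ := h
    exact ⟨Λ.d p.1, f.SS'_mem_levelSpan hrf le_rfl⟩
  | zero => exact ⟨0, zero_mem _⟩
  | add x y _ _ hx hy =>
    obtain ⟨N, hN⟩ := hx
    obtain ⟨M, hM⟩ := hy
    exact ⟨N ⊔ M, add_mem (f.levelSpan_mono hrf le_sup_left hN)
      (f.levelSpan_mono hrf le_sup_right hM)⟩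
  | smul c x _ hx =>
    obtain ⟨N, hN⟩ := hx
    exact ⟨N, Submodule.smul_mem _ c hN⟩

end LevelSpan

open Classical in
lemma S'_mul_SS' {μ : Λ.E} {p : Λ.E × Λ.E} (hd : Λ.d μ = Λ.d p.1)
    (hs : Λ.s p.1 = Λ.s p.2) :
    f.S' μ * f.SS' p = if p.1 = μ then f.S' p.2 else 0 := by
  rw [SS', ← mul_assoc]
  split_ifs with h
  · rw [h, f.S'_mul_S_self, ← h, hs, f.P_s_mul_S']
  · rw [f.S'_mul_S_of_ne hd (Ne.symm h), zero_mul]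

open Classical in
lemma S'_mul_S'_mul_S_mul_S (hrf : Λ.RowFinite) {l α β : Λ.E} (hα : Λ.s α = Λ.r l)
    (hβ : Λ.s β = Λ.r l) (hsep : Λ.d α ≠ Λ.d β → Λ.Separates l (Λ.d β) (Λ.d α)) :
    f.S' l * (f.S' α * f.S β) * f.S l = if α = β then f.P (Λ.s l) else 0 := by
  split_ifs with h
  · rw [h, f.S'_mul_S_self, hβ, f.S'_mul_P_r, f.S'_mul_S_self]
  by_cases hd : Λ.d α = Λ.d β
  · rw [f.S'_mul_S_of_ne hd h, mul_zero, zero_mul]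
  rw [← mul_assoc, f.S'_mul_S' hα, mul_assoc, f.S_mul_S hβ]
  refine f.S'_mul_S_eq_zero hrf fun x y hx hy => ?_
  rw [Λ.s_comp hα] at hx
  rw [Λ.s_comp hβ] at hy
  exact (hsep hd).comp_ne hα hβ hx hy

theorem exists_mul_linearCombination_mul_eq_smul_P {R : Type} [CommSemiring R] [Algebra R A]
    (hrf : Λ.RowFinite) (hap : Λ.Aperiodic) {N : Fin k → ℕ} {w : Λ.E × Λ.E →₀ R}
    (hw : w ∈ Finsupp.supported R R (Λ.normalPairs N)) {p₀ : Λ.E × Λ.E}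
    (hp₀ : p₀ ∈ w.support) :
    ∃ x y v, x * Finsupp.linearCombination R f.SS' w * y = w p₀ • f.P v := by
  classical
  have hnormal := (Finsupp.mem_supported R w).1 hw
  obtain ⟨l, hrl, hsep⟩ := Λ.exists_forall_separates hap (Λ.s p₀.2) (Λ.d p₀.2)
    ((w.support.image fun p => Λ.d p.2).erase (Λ.d p₀.2)) (Finset.notMem_erase _ _)
  refine ⟨f.S' l * f.S' p₀.1, f.S p₀.2 * f.S l, Λ.s l, ?_⟩
  have hterm : ∀ p ∈ w.support, f.S' l * f.S' p₀.1 * f.SS' p * (f.S p₀.2 * f.S l) =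
      if p = p₀ then f.P (Λ.s l) else 0 := by
    intro p hp
    obtain ⟨hd, hs⟩ := hnormal hp
    obtain ⟨hd₀, hs₀⟩ := hnormal hp₀
    rw [mul_assoc (f.S' l), f.S'_mul_SS' (hd₀.trans hd.symm) hs]
    by_cases h₁ : p.1 = p₀.1
    · rw [if_pos h₁, ← mul_assoc, mul_assoc _ (f.S' p.2),
        if_congr (Prod.ext_iff.trans (and_iff_right h₁)) rfl rfl]
      refine f.S'_mul_S'_mul_S_mul_S hrf ?_ hrl.symm fun hne => hsep _ ?_
      · rw [← hs, h₁, hs₀, hrl]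
      · exact Finset.mem_erase.2 ⟨hne, Finset.mem_image_of_mem _ hp⟩
    · rw [if_neg h₁, if_neg fun h => h₁ (congrArg Prod.fst h), mul_zero, zero_mul]
  rw [Finsupp.linearCombination_apply, Finsupp.sum, Finset.mul_sum, Finset.sum_mul]
  simp_rw [mul_smul_comm, smul_mul_assoc]
  rw [Finset.sum_congr rfl fun p hp => congrArg (w p • ·) (hterm p hp)]
  simp_rw [smul_ite, smul_zero]
  rw [Finset.sum_ite_eq', if_pos hp₀]

end KPFamily

lemma KPAlgebra.mem_span_range_SS' {k : ℕ} {Λ : KGraph k} {R : Type} [CommRing R]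
    {A : Type} [Ring A] [Algebra R A] (KP : KPAlgebra Λ R A) (a : A) :
    a ∈ Submodule.span R (Set.range KP.fam.SS') := by
  obtain ⟨y, rfl⟩ := KP.grading_internal.surjective a
  induction y using DirectSum.induction_on with
  | zero => simp
  | of n x =>
    rw [DirectSum.coeAddMonoidHom_of]
    have hx : (x : A) ∈ (KP.grading n : Set A) := x.2
    rw [KP.grading_eq n] at hx
    exact Submodule.span_mono (by rintro _ ⟨l, m, -, rfl⟩; exact ⟨(l, m), rfl⟩) hx
  | add x y hx hy => rw [map_add]; exact add_mem hx hy

theorem cuntz_krieger_uniqueness_general (k : ℕ) (Λ : KGraph k)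
    (hap : Λ.Aperiodic) (hrf : Λ.RowFinite)
    (R : Type) [CommRing R] (A : Type) [Ring A] [Algebra R A]
    (KP : KPAlgebra Λ R A)
    (B : Type) [Ring B] (π : A →+* B)
    (hv : ∀ (c : R) (v : Λ.V), c ≠ 0 → π (c • KP.fam.P v) ≠ 0) :
    Function.Injective π := by
  refine (injective_iff_map_eq_zero π).2 fun a ha => ?_
  by_contra ha₀
  obtain ⟨N, haN⟩ := KP.fam.exists_mem_levelSpan hrf (KP.mem_span_range_SS' a)
  obtain ⟨w, hw, rfl⟩ := (Finsupp.mem_span_image_iff_linearCombination R).1 haN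
  obtain ⟨p₀, hp₀⟩ := Finsupp.support_nonempty_iff.2 fun hw₀ : w = 0 =>
    ha₀ (by rw [hw₀]; exact map_zero _)
  obtain ⟨x, y, v, hxy⟩ := KP.fam.exists_mul_linearCombination_mul_eq_smul_P hrf hap hw hp₀
  refine hv (w p₀) v (Finsupp.mem_support_iff.1 hp₀) ?_
  rw [← hxy, map_mul, map_mul, ha, mul_zero, zero_mul]

/-- **Theorem 4.5 (the Cuntz-Krieger uniqueness theorem).**  Let `Λ` be an
aperiodic row-finite `k`-graph without sources, `R` a commutative ring with
`1`, and `B` a ring.  If `π : KP_R(Λ) → B` is a ring homomorphism such that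
`π (c • p_v) ≠ 0` for all `c ∈ R∖{0}` and `v ∈ Λ^0`, then `π` is injective. -/
theorem cuntz_krieger_uniqueness (k : ℕ) (hk : 0 < k) (Λ : KGraph k)
    (hap : Λ.Aperiodic) (hrf : Λ.RowFinite) (hns : Λ.NoSources)
    (R : Type) [CommRing R] (A : Type) [Ring A] [Algebra R A]
    (KP : KPAlgebra Λ R A)
    (B : Type) [Ring B] (π : A →+* B)
    (hv : ∀ (c : R) (v : Λ.V), c ≠ 0 → π (c • KP.fam.P v) ≠ 0) :
    Function.Injective π :=
  cuntz_krieger_uniqueness_general k Λ hap hrf R A KP B π hv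

end KP
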